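/- arXiv:1611.10335 — 7 statements merged into one kernel-verified Lean document; each statement's English description precedes it below -/
import Mathlib

section
/- Let g₀ and g₁ be concave functions on [a,b] with a < b, and let t ∈ [a,b]. Then g₀(t) - g₁(t) ≤ ((b-t)/(b-a))(g₀(a) - g₁(a)) + ((t-a)/(b-a))(g₀(b) - g₁(b)) + ((b-t)(t-a)/(b-a))(g₀'(a+) - g₀'(b-)), where g₀'(a+) and g₀'(b-) denote the right and left derivatives of g₀. -/
/-!
Both tangent lines of `g₀` at the endpoints lie above `g₀`; averaging them with the barycentric
weights of `t` gives the chord of `g₀` plus `(b - t) (t - a) / (b - a) · (g₀'(a+) - g₀'(b-))`,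
while the chord of `g₁` lies below `g₁`.
-/

open Set

theorem ConcaveOn.le_add_mul_sub_of_hasDerivWithinAt {S : Set ℝ} {f : ℝ → ℝ} {x y f' : ℝ}
    (hf : ConcaveOn ℝ S f) (hx : x ∈ S) (hy : y ∈ S) (hf' : HasDerivWithinAt f f' S x) :
    f y ≤ f x + f' * (y - x) := by
  rcases lt_trichotomy x y with hxy | rfl | hyx
  · have hslope := hf.slope_le_of_hasDerivWithinAt hx hy hxy hf'
    rw [slope_def_field, div_le_iff₀ (sub_pos.mpr hxy)] at hslope
    linarith
  · simp
  · have hslope := hf.le_slope_of_hasDerivWithinAt hy hx hyx hf'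
    rw [slope_def_field, le_div_iff₀ (sub_pos.mpr hyx)] at hslope
    linarith

section Interval

variable {a b t : ℝ}

theorem barycentric_weights_nonneg (hab : a < b) (ht : t ∈ Icc a b) :
    0 ≤ (b - t) / (b - a) ∧ 0 ≤ (t - a) / (b - a) :=
  ⟨div_nonneg (sub_nonneg.mpr ht.2) (sub_pos.mpr hab).le,
    div_nonneg (sub_nonneg.mpr ht.1) (sub_pos.mpr hab).le⟩

theorem barycentric_weights_add (hab : a < b) :
    (b - t) / (b - a) + (t - a) / (b - a) = 1 := by
  field_simp [(sub_pos.mpr hab).ne']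
  ring

theorem ConcaveOn.chord_le_of_mem_Icc {g : ℝ → ℝ} (hg : ConcaveOn ℝ (Icc a b) g) (hab : a < b)
    (ht : t ∈ Icc a b) :
    (b - t) / (b - a) * g a + (t - a) / (b - a) * g b ≤ g t := by
  obtain ⟨hwa, hwb⟩ := barycentric_weights_nonneg hab ht
  have hcomb : (b - t) / (b - a) * a + (t - a) / (b - a) * b = t := by
    field_simp [(sub_pos.mpr hab).ne']
    ring
  simpa only [smul_eq_mul, hcomb] using
    hg.2 (left_mem_Icc.mpr hab.le) (right_mem_Icc.mpr hab.le) hwa hwb (barycentric_weights_add hab)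

theorem ConcaveOn.le_chord_add_of_hasDerivWithinAt {g : ℝ → ℝ} {dA dB : ℝ}
    (hg : ConcaveOn ℝ (Icc a b) g) (hab : a < b) (ht : t ∈ Icc a b)
    (hdA : HasDerivWithinAt g dA (Icc a b) a) (hdB : HasDerivWithinAt g dB (Icc a b) b) :
    g t ≤ (b - t) / (b - a) * g a + (t - a) / (b - a) * g b
      + (b - t) * (t - a) / (b - a) * (dA - dB) := by
  obtain ⟨hwa, hwb⟩ := barycentric_weights_nonneg hab ht
  have htangentA := hg.le_add_mul_sub_of_hasDerivWithinAt (left_mem_Icc.mpr hab.le) ht hdA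
  have htangentB := hg.le_add_mul_sub_of_hasDerivWithinAt (right_mem_Icc.mpr hab.le) ht hdB
  calc g t = (b - t) / (b - a) * g t + (t - a) / (b - a) * g t := by
        rw [← add_mul, barycentric_weights_add hab, one_mul]
    _ ≤ (b - t) / (b - a) * (g a + dA * (t - a)) + (t - a) / (b - a) * (g b + dB * (t - b)) := by
        gcongr
    _ = _ := by
        field_simp [(sub_pos.mpr hab).ne']
        ring

end Interval

/-- Concave-function difference bound (Lemma `convexFunDiffs`). -/
theorem stmt0 (a b t : ℝ) (hab : a < b) (ht : t ∈ Icc a b)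
    (g₀ g₁ : ℝ → ℝ)
    (hg₀ : ConcaveOn ℝ (Icc a b) g₀) (hg₁ : ConcaveOn ℝ (Icc a b) g₁)
    (dA dB : ℝ)
    (hdA : HasDerivWithinAt g₀ dA (Icc a b) a)
    (hdB : HasDerivWithinAt g₀ dB (Icc a b) b) :
    g₀ t - g₁ t ≤ (b - t) / (b - a) * (g₀ a - g₁ a)
      + (t - a) / (b - a) * (g₀ b - g₁ b)
      + (b - t) * (t - a) / (b - a) * (dA - dB) := by
  have h₀ := hg₀.le_chord_add_of_hasDerivWithinAt hab ht hdA hdB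
  have h₁ := hg₁.chord_le_of_mem_Icc hab ht
  linarith
end

section
/- For all real numbers a < 0 < b with -a ≥ b, the inequality (a⁵ - 5a⁴b - 8a²b³ + 12b⁵)/(48(5b - 2a)) ≤ -a⁴/(48·7) holds. -/
theorem stmt1 (a b : ℝ) (ha : a < 0) (hb : 0 < b) (hab : -a ≥ b) :
    (a^5 - 5*a^4*b - 8*a^2*b^3 + 12*b^5) / (48*(5*b - 2*a)) ≤ -a^4 / (48*7) := by
  rw [div_le_div_iff₀ (by nlinarith) (by norm_num)]
  have h4 : b^4 ≤ a^4 := by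
    have := pow_le_pow_left₀ hb.le hab 4
    calc b^4 ≤ (-a)^4 := this
      _ = a^4 := by ring
  have h5 : b^5 ≤ -a^5 := by
    have := pow_le_pow_left₀ hb.le hab 5
    calc b^5 ≤ (-a)^5 := this
      _ = -a^5 := by ring
  have h2 : b^2 ≤ a^2 := by
    have := pow_le_pow_left₀ hb.le hab 2
    calc b^2 ≤ (-a)^2 := this
      _ = a^2 := by ring
  have hA : b^5 ≤ a^4 * b := by nlinarith
  have hB : b^5 ≤ a^2 * b^3 := by nlinarith [mul_pos hb (mul_pos hb hb)]
  nlinarith [pow_pos hb 5]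
end

section
/- Let a < 0 < b with b = h_l ≥ -a = h_s (or symmetrically), and let Δ : [a,b] → ℝ be defined by Δ(t) = (b/(-a))(t - a) for t ∈ [a,0], Δ(t) = b - t for t ∈ [0,b]. Let Δ₁(t) = Δ(t) - h_l/2. Then ∫_a^b Δ₁(t) dt = 0 and ∫_a^b t² Δ₁(t) dt = -(1/12)(h_s³ h_l + h_l⁴) ≤ -(1/12) h_l⁴. -/
open Set intervalIntegral

theorem intervalIntegral.integral_eq_add_of_eqOn_uIcc {f g h : ℝ → ℝ} {a b c : ℝ}
    (hg : Continuous g) (hh : Continuous h)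
    (hfg : EqOn f g (uIcc a c)) (hfh : EqOn f h (uIcc c b)) :
    ∫ x in a..b, f x = (∫ x in a..c, g x) + ∫ x in c..b, h x := by
  have hf_ac : IntervalIntegrable f MeasureTheory.volume a c :=
    (hg.intervalIntegrable a c).congr fun x hx => (hfg (uIoc_subset_uIcc hx)).symm
  have hf_cb : IntervalIntegrable f MeasureTheory.volume c b :=
    (hh.intervalIntegrable c b).congr fun x hx => (hfh (uIoc_subset_uIcc hx)).symm
  rw [← integral_add_adjacent_intervals hf_ac hf_cb, integral_congr hfg, integral_congr hfh]

theorem intervalIntegral.integral_affine (c d p q : ℝ) :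
    ∫ t in p..q, c * t + d = c * (q ^ 2 - p ^ 2) / 2 + d * (q - p) := by
  rw [integral_add ((continuous_const_mul c).intervalIntegrable p q) intervalIntegrable_const,
    integral_const_mul, integral_id, integral_const, smul_eq_mul]
  ring

theorem intervalIntegral.integral_cube_add_sq (c d p q : ℝ) :
    ∫ t in p..q, c * t ^ 3 + d * t ^ 2 = c * (q ^ 4 - p ^ 4) / 4 + d * (q ^ 3 - p ^ 3) / 3 := by
  have hc : Continuous fun t : ℝ => c * t ^ 3 := by fun_prop
  have hd : Continuous fun t : ℝ => d * t ^ 2 := by fun_prop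
  rw [integral_add (hc.intervalIntegrable p q) (hd.intervalIntegrable p q),
    integral_const_mul, integral_const_mul, integral_pow, integral_pow]
  ring

section Tent

variable {a b : ℝ} {Δ Δ₁ : ℝ → ℝ}
  (hΔ : ∀ t ∈ Icc a b, Δ t = if t ≤ 0 then b / (-a) * (t - a) else b - t)
  (hΔ₁ : ∀ t ∈ Icc a b, Δ₁ t = Δ t - b / 2)
include hΔ hΔ₁

theorem eqOn_tent_sub_left (ha : a < 0) (hb : 0 < b) :
    EqOn Δ₁ (fun t => b / (-a) * t + b / 2) (uIcc a 0) := by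
  intro t ht
  rw [uIcc_of_le ha.le] at ht
  rw [hΔ₁ t ⟨ht.1, ht.2.trans hb.le⟩, hΔ t ⟨ht.1, ht.2.trans hb.le⟩, if_pos ht.2]
  field_simp [ha.ne]
  ring

theorem eqOn_tent_sub_right (ha : a < 0) (hb : 0 < b) :
    EqOn Δ₁ (fun t => b / 2 - t) (uIcc 0 b) := by
  intro t ht
  rw [uIcc_of_le hb.le] at ht
  have hat : t ∈ Icc a b := ⟨ha.le.trans ht.1, ht.2⟩
  rcases ht.1.eq_or_lt with rfl | ht0
  · rw [(eqOn_tent_sub_left hΔ hΔ₁ ha hb) (by simp [ha.le])]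
    simp
  · rw [hΔ₁ t hat, hΔ t hat, if_neg ht0.not_ge]
    ring

end Tent

theorem stmt6_general (a b : ℝ) (ha : a < 0) (hb : 0 < b)
    (Δ Δ₁ : ℝ → ℝ)
    (hΔ : ∀ t ∈ Set.Icc a b, Δ t = if t ≤ 0 then b / (-a) * (t - a) else b - t)
    (hΔ₁ : ∀ t ∈ Set.Icc a b, Δ₁ t = Δ t - b / 2) :
    (∫ t in a..b, Δ₁ t) = 0 ∧
    (∫ t in a..b, t^2 * Δ₁ t) = -(1/12) * ((-a)^3 * b + b^4) ∧
    (∫ t in a..b, t^2 * Δ₁ t) ≤ -(1/12) * b^4 := by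
  have hL := eqOn_tent_sub_left hΔ hΔ₁ ha hb
  have hR := eqOn_tent_sub_right hΔ hΔ₁ ha hb
  have mean : ∫ t in a..b, Δ₁ t = 0 := by
    rw [integral_eq_add_of_eqOn_uIcc (c := 0) (g := fun t => b / (-a) * t + b / 2)
      (h := fun t => -1 * t + b / 2) (by fun_prop) (by fun_prop) hL
      (fun t ht => by simp only [hR ht]; ring), integral_affine, integral_affine]
    field_simp [ha.ne]
    ring
  have moment : ∫ t in a..b, t ^ 2 * Δ₁ t = -(1 / 12) * ((-a) ^ 3 * b + b ^ 4) := by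
    rw [integral_eq_add_of_eqOn_uIcc (c := 0) (g := fun t => b / (-a) * t ^ 3 + b / 2 * t ^ 2)
      (h := fun t => -1 * t ^ 3 + b / 2 * t ^ 2) (by fun_prop) (by fun_prop)
      (fun t ht => by simp only [hL ht]; ring) (fun t ht => by simp only [hR ht]; ring),
      integral_cube_add_sq, integral_cube_add_sq]
    field_simp [ha.ne]
    ring
  refine ⟨mean, moment, ?_⟩
  rw [moment]
  nlinarith [pow_pos (neg_pos.mpr ha) 3]

/-- The 'not a knot' perturbation computation: here `h_l = b = max(b,-a)` and
`h_s = -a = min(b,-a)`. -/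
theorem stmt6 (a b : ℝ) (ha : a < 0) (hb : 0 < b) (hba : -a ≤ b)
    (Δ Δ₁ : ℝ → ℝ)
    (hΔ : ∀ t ∈ Set.Icc a b, Δ t = if t ≤ 0 then b / (-a) * (t - a) else b - t)
    (hΔ₁ : ∀ t ∈ Set.Icc a b, Δ₁ t = Δ t - b / 2) :
    (∫ t in a..b, Δ₁ t) = 0 ∧
    (∫ t in a..b, t^2 * Δ₁ t) = -(1/12) * ((-a)^3 * b + b^4) ∧
    (∫ t in a..b, t^2 * Δ₁ t) ≤ -(1/12) * b^4 :=
  stmt6_general a b ha hb Δ Δ₁ hΔ hΔ₁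
end

section
/- If F and G are of bounded variation on [a,b] and there is no point of [a,b] at which F and G are both discontinuous, then ∫_{[a,b]} F dG + ∫_{[a,b]} G dF = F(b)G(b) - F(a-)G(a-), where F(a-), G(a-) denote left limits at a. -/
open MeasureTheory Set Filter

open scoped Topology

/-!
Write `F = F(a-) + Φ` and `G = G(a-) + Ψ`, where `Φ x = dF ([a, x])` and `Ψ x = dG ([a, x])`.
Splitting `[a, b]²` along the diagonal and applying Fubini to both halves gives
`∫ Φ dG + ∫ Ψ dF = dF([a, b]) dG([a, b]) + ∑ₓ dF{x} dG{x}`, because the diagonal is counted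
twice. A continuity point of `F` carries no atom of `dF` (the increments `dF (x - r, x]` tend
both to `0` and to `dF{x}`), so the sum over common atoms vanishes, and expanding `F b G b`
gives the formula.
-/

section CountableSupport

variable {α : Type*} [MeasurableSpace α]

theorem measurable_of_countable_support [MeasurableSingletonClass α] {β : Type*} [Zero β]
    [MeasurableSpace β] {f : α → β} (hf : (Function.support f).Countable) : Measurable f := by
  intro B _
  by_cases h0 : (0 : β) ∈ B
  · have hcompl : (f ⁻¹' B)ᶜ ⊆ Function.support f := fun x hx hfx => hx (by simp [hfx, h0])
    simpa using (hf.mono hcompl).measurableSet.compl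
  · exact (hf.mono fun x hx (hfx : f x = 0) => h0 (hfx ▸ hx)).measurableSet

theorem countable_setOf_measure_singleton_pos [MeasurableSingletonClass α] (μ : Measure α)
    [SFinite μ] : {x | 0 < μ {x}}.Countable :=
  Measure.countable_meas_pos_of_disjoint_iUnion measurableSet_singleton
    fun _ _ h => disjoint_singleton.mpr h

theorem countable_support_measureReal_singleton [MeasurableSingletonClass α] (μ : Measure α)
    [SFinite μ] : (Function.support fun x => μ.real {x}).Countable :=
  (countable_setOf_measure_singleton_pos μ).mono fun x hx =>
    pos_iff_ne_zero.mpr fun (h : μ {x} = 0) => hx (by simp [measureReal_def, h])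

theorem setIntegral_congr_measure_of_countable_support {E : Type*} [NormedAddCommGroup E]
    [NormedSpace ℝ E] {μ ν : Measure α} {f : α → E} {s : Set α} (hs : MeasurableSet s)
    (hf : (s ∩ Function.support f).Countable)
    (hμν : ∀ x ∈ s ∩ Function.support f, μ {x} = ν {x}) :
    ∫ x in s, f x ∂μ = ∫ x in s, f x ∂ν := by
  have hsupp : ∀ x ∈ s \ (s ∩ Function.support f), f x = 0 := fun x hx =>
    Function.notMem_support.mp fun h => hx.2 ⟨hx.1, h⟩
  have hrestrict : μ.restrict (s ∩ Function.support f) = ν.restrict (s ∩ Function.support f) := by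
    rw [← biUnion_of_singleton (s ∩ Function.support f), Measure.restrict_biUnion_congr hf]
    intro x hx
    rw [Measure.restrict_singleton, Measure.restrict_singleton, hμν x hx]
  rw [setIntegral_eq_of_subset_of_forall_sdiff_eq_zero hs inter_subset_left hsupp,
    setIntegral_eq_of_subset_of_forall_sdiff_eq_zero hs inter_subset_left hsupp, hrestrict]

end CountableSupport

theorem integrable_measureReal_comp {α β : Type*} [MeasurableSpace α] [MeasurableSpace β]
    {μ : Measure α} {ν : Measure β} [IsFiniteMeasure μ] [IsFiniteMeasure ν] {t : β → Set α}
    (ht : Measurable fun x => μ.real (t x)) : Integrable (fun x => μ.real (t x)) ν :=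
  .of_bound ht.aestronglyMeasurable (μ.real univ) <| ae_of_all _ fun x => by
    rw [Real.norm_of_nonneg measureReal_nonneg]
    exact measureReal_mono (subset_univ _)

theorem setIntegral_eq_mul_add_of_eqOn {α : Type*} [MeasurableSpace α] {ν : Measure α}
    [IsFiniteMeasure ν] {F g : α → ℝ} {c : ℝ} {s : Set α} (hs : MeasurableSet s)
    (hF : ∀ y ∈ s, F y = c + g y) (hg : IntegrableOn g s ν) :
    ∫ x in s, F x ∂ν = c * ν.real s + ∫ x in s, g x ∂ν := by
  rw [setIntegral_congr_fun hs hF, integral_add (integrable_const c) hg, setIntegral_const,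
    smul_eq_mul, mul_comm]

theorem Monotone.measurable_measure {α β : Type*} [MeasurableSpace α] [LinearOrder β]
    [TopologicalSpace β] [OrderClosedTopology β] [MeasurableSpace β] [BorelSpace β]
    (μ : Measure α) {t : β → Set α} (ht : Monotone t) : Measurable fun x => μ (t x) :=
  Monotone.measurable fun _ _ hxy => measure_mono (ht hxy)

theorem monotone_inter_Iic {α : Type*} [Preorder α] (s : Set α) :
    Monotone fun x => s ∩ Iic x :=
  fun _ _ hxy => inter_subset_inter_right s (Iic_subset_Iic.mpr hxy)

theorem monotone_inter_Iio {α : Type*} [Preorder α] (s : Set α) :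
    Monotone fun x => s ∩ Iio x :=
  fun _ _ hxy => inter_subset_inter_right s (Iio_subset_Iio hxy)

def signedCDF {α : Type*} [LinearOrder α] [MeasurableSpace α] (μp μm : Measure α) (s : Set α)
    (x : α) : ℝ :=
  μp.real (s ∩ Iic x) - μm.real (s ∩ Iic x)

theorem signedCDF_of_subset_Iic {α : Type*} [LinearOrder α] [MeasurableSpace α]
    (μp μm : Measure α) {s : Set α} {x : α} (hs : s ⊆ Iic x) :
    signedCDF μp μm s x = μp.real s - μm.real s := by
  rw [signedCDF, inter_eq_left.mpr hs]

section LinearOrder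

variable {α : Type*} [LinearOrder α] [TopologicalSpace α] [OrderClosedTopology α]
  [MeasurableSpace α] [BorelSpace α]

theorem integrable_measureReal_inter_Iic (μ ν : Measure α) [IsFiniteMeasure μ]
    [IsFiniteMeasure ν] (s : Set α) : Integrable (fun x => μ.real (s ∩ Iic x)) ν :=
  integrable_measureReal_comp ((monotone_inter_Iic s).measurable_measure μ).ennreal_toReal

theorem integrable_signedCDF (μp μm ν : Measure α) [IsFiniteMeasure μp] [IsFiniteMeasure μm]
    [IsFiniteMeasure ν] (s : Set α) : Integrable (signedCDF μp μm s) ν :=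
  (integrable_measureReal_inter_Iic μp ν s).sub (integrable_measureReal_inter_Iic μm ν s)

variable [SecondCountableTopology α]

theorem setLIntegral_measure_inter_Iic_add_setLIntegral_measure_inter_Iio (μ ν : Measure α)
    [SFinite μ] [SFinite ν] {s : Set α} (hs : MeasurableSet s) :
    ∫⁻ x in s, ν (s ∩ Iic x) ∂μ + ∫⁻ y in s, μ (s ∩ Iio y) ∂ν = μ s * ν s := by
  set P : Set (α × α) := {p | p.2 ≤ p.1}
  have hP : MeasurableSet P := measurableSet_le measurable_snd measurable_fst
  have hbelow : ((μ.restrict s).prod (ν.restrict s)) P = ∫⁻ x in s, ν (s ∩ Iic x) ∂μ := by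
    rw [Measure.prod_apply hP]
    refine lintegral_congr fun x => ?_
    rw [Measure.restrict_apply' hs, inter_comm]
    rfl
  have habove : ((μ.restrict s).prod (ν.restrict s)) Pᶜ = ∫⁻ y in s, μ (s ∩ Iio y) ∂ν := by
    rw [Measure.prod_apply_symm hP.compl]
    refine lintegral_congr fun y => ?_
    rw [Measure.restrict_apply' hs, inter_comm]
    congr 2
    ext x
    simp [P]
  rw [← hbelow, ← habove, measure_add_measure_compl hP, ← univ_prod_univ, Measure.prod_prod,
    Measure.restrict_apply_univ, Measure.restrict_apply_univ]

theorem setIntegral_measureReal_inter_Iic_add_setIntegral_measureReal_inter_Iic (μ ν : Measure α)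
    [IsFiniteMeasure μ] [IsFiniteMeasure ν] {s : Set α} (hs : MeasurableSet s) :
    ∫ x in s, ν.real (s ∩ Iic x) ∂μ + ∫ y in s, μ.real (s ∩ Iic y) ∂ν
      = μ.real s * ν.real s + ∫ y in s, μ.real {y} ∂ν := by
  have hsplit : ∀ y ∈ s, μ.real (s ∩ Iic y) = μ.real (s ∩ Iio y) + μ.real {y} := fun y hy => by
    rw [← measureReal_union (disjoint_singleton_right.mpr fun h => lt_irrefl y h.2)
      (measurableSet_singleton y), ← Iio_union_right, inter_union_distrib_left,
      inter_eq_right.mpr (singleton_subset_iff.mpr hy)]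
  have htoReal : ∀ (ρ κ : Measure α) [IsFiniteMeasure κ] {t : α → Set α}, Monotone t →
      ∫ x in s, κ.real (t x) ∂ρ = (∫⁻ x in s, κ (t x) ∂ρ).toReal := fun ρ κ _ _ ht =>
    integral_toReal (ht.measurable_measure κ).aemeasurable (ae_of_all _ fun _ => measure_lt_top _ _)
  have hfubini := setLIntegral_measure_inter_Iic_add_setLIntegral_measure_inter_Iio μ ν hs
  have hfinite : ∫⁻ x in s, ν (s ∩ Iic x) ∂μ + ∫⁻ y in s, μ (s ∩ Iio y) ∂ν ≠ ⊤ := by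
    rw [hfubini]
    exact ENNReal.mul_ne_top (measure_ne_top _ _) (measure_ne_top _ _)
  rw [setIntegral_congr_fun hs hsplit, integral_add
      (integrable_measureReal_comp ((monotone_inter_Iio s).measurable_measure μ).ennreal_toReal)
      (integrable_measureReal_comp (measurable_of_countable_support
        (countable_support_measureReal_singleton μ))),
    ← add_assoc, htoReal μ ν (monotone_inter_Iic s), htoReal ν μ (monotone_inter_Iio s),
    ← ENNReal.toReal_add (ENNReal.add_ne_top.mp hfinite).1 (ENNReal.add_ne_top.mp hfinite).2,
    hfubini, ENNReal.toReal_mul, measureReal_def, measureReal_def]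

theorem setIntegral_signedCDF_by_parts (μp μm νp νm : Measure α) [IsFiniteMeasure μp]
    [IsFiniteMeasure μm] [IsFiniteMeasure νp] [IsFiniteMeasure νm] {s : Set α}
    (hs : MeasurableSet s) (hatoms : ∀ x ∈ s, μp {x} = μm {x} ∨ νp {x} = νm {x}) :
    ((∫ x in s, signedCDF μp μm s x ∂νp) - ∫ x in s, signedCDF μp μm s x ∂νm)
      + ((∫ x in s, signedCDF νp νm s x ∂μp) - ∫ x in s, signedCDF νp νm s x ∂μm)
      = (μp.real s - μm.real s) * (νp.real s - νm.real s) := by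
  have hint : ∀ (μ ρ : Measure α) [IsFiniteMeasure μ] [IsFiniteMeasure ρ],
      Integrable (fun x => μ.real (s ∩ Iic x)) (ρ.restrict s) := fun μ ρ _ _ =>
    integrable_measureReal_inter_Iic μ (ρ.restrict s) s
  have hint_atom : ∀ (μ ρ : Measure α) [IsFiniteMeasure μ] [IsFiniteMeasure ρ],
      Integrable (fun x => μ.real {x}) (ρ.restrict s) := fun μ _ _ _ =>
    integrable_measureReal_comp
      (measurable_of_countable_support (countable_support_measureReal_singleton μ))
  have hjumps : ∫ y in s, (μp.real {y} - μm.real {y}) ∂νp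
      = ∫ y in s, (μp.real {y} - μm.real {y}) ∂νm := by
    refine setIntegral_congr_measure_of_countable_support hs
      (((countable_support_measureReal_singleton μp).union
        (countable_support_measureReal_singleton μm)).mono
          (inter_subset_right.trans (Function.support_sub _ _))) fun x hx => ?_
    refine (hatoms x hx.1).resolve_left fun h => hx.2 ?_
    simp [measureReal_def, h]
  simp only [signedCDF]
  rw [integral_sub (hint μp νp) (hint μm νp), integral_sub (hint μp νm) (hint μm νm),
    integral_sub (hint νp μp) (hint νm μp), integral_sub (hint νp μm) (hint νm μm)]
  rw [integral_sub (hint_atom μp νp) (hint_atom μm νp),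
    integral_sub (hint_atom μp νm) (hint_atom μm νm)] at hjumps
  linear_combination
    setIntegral_measureReal_inter_Iic_add_setIntegral_measureReal_inter_Iic μp νp hs
    - setIntegral_measureReal_inter_Iic_add_setIntegral_measureReal_inter_Iic μm νp hs
    - setIntegral_measureReal_inter_Iic_add_setIntegral_measureReal_inter_Iic μp νm hs
    + setIntegral_measureReal_inter_Iic_add_setIntegral_measureReal_inter_Iic μm νm hs + hjumps

end LinearOrder

section Real

variable {a b c : ℝ} {F : ℝ → ℝ} {μp μm : Measure ℝ} [IsFiniteMeasure μp] [IsFiniteMeasure μm]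

theorem eq_add_signedCDF_of_measureReal_Ioc
    (hμ : ∀ x y, a ≤ x → x ≤ y → y ≤ b → F y - F x = μp.real (Ioc x y) - μm.real (Ioc x y))
    (ha : F a - c = μp.real {a} - μm.real {a}) {y : ℝ} (hy : y ∈ Icc a b) :
    F y = c + signedCDF μp μm (Icc a b) y := by
  have hset : Icc a b ∩ Iic y = {a} ∪ Ioc a y := by
    rw [singleton_union, Ioc_insert_left hy.1]
    ext z
    exact ⟨fun h => ⟨h.1.1, h.2⟩, fun h => ⟨⟨h.1, h.2.trans hy.2⟩, h.2⟩⟩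
  have hdisj : Disjoint {a} (Ioc a y) := disjoint_singleton_left.mpr (lt_irrefl a ·.1)
  rw [signedCDF, hset, measureReal_union hdisj measurableSet_Ioc,
    measureReal_union hdisj measurableSet_Ioc]
  linarith [hμ a y le_rfl hy.1 hy.2]

theorem iInter_Ioc_sub_eq_singleton (x : ℝ) : ⋂ r > 0, Ioc (x - r) x = {x} := by
  ext y
  simp only [mem_iInter, mem_Ioc, mem_singleton_iff]
  refine ⟨fun h => (h 1 one_pos).2.antisymm ?_, fun hy r hr => ⟨by linarith, hy.le⟩⟩
  by_contra! hyx
  linarith [(h (x - y) (sub_pos.mpr hyx)).1]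

theorem tendsto_measureReal_Ioc_sub_nhdsGT (ρ : Measure ℝ) [IsFiniteMeasure ρ] (x : ℝ) :
    Tendsto (fun r => ρ.real (Ioc (x - r) x)) (𝓝[>] 0) (𝓝 (ρ.real {x})) := by
  have h := tendsto_measure_biInter_gt (μ := ρ) (s := fun r => Ioc (x - r) x)
    (fun _ _ => measurableSet_Ioc.nullMeasurableSet)
    (fun _ _ _ hij => Ioc_subset_Ioc_left (by linarith)) ⟨1, one_pos, measure_ne_top _ _⟩
  rw [iInter_Ioc_sub_eq_singleton] at h
  exact (ENNReal.tendsto_toReal (measure_ne_top _ _)).comp h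

theorem measure_singleton_eq_of_continuousAt
    (hμ : ∀ x y, a ≤ x → x ≤ y → y ≤ b → F y - F x = μp.real (Ioc x y) - μm.real (Ioc x y))
    (ha : F a - c = μp.real {a} - μm.real {a}) (hc : Tendsto F (𝓝[<] a) (𝓝 c)) {x : ℝ}
    (hx : x ∈ Icc a b) (hFx : ContinuousAt F x) : μp {x} = μm {x} := by
  rw [← measureReal_eq_measureReal_iff]
  rcases hx.1.eq_or_lt with rfl | hax
  · linarith [tendsto_nhds_unique hc (hFx.tendsto.mono_left nhdsWithin_le_nhds)]
  have hsub : Tendsto (fun r => x - r) (𝓝[>] 0) (𝓝 x) := by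
    simpa using (tendsto_const_nhds.sub tendsto_id).mono_left (nhdsWithin_le_nhds (a := (0 : ℝ)))
  have hF : Tendsto (fun r => F x - F (x - r)) (𝓝[>] 0) (𝓝 0) := by
    simpa using (tendsto_const_nhds (x := F x)).sub (hFx.tendsto.comp hsub)
  have hincr : (fun r => F x - F (x - r))
      =ᶠ[𝓝[>] 0] fun r => μp.real (Ioc (x - r) x) - μm.real (Ioc (x - r) x) := by
    filter_upwards [Ioo_mem_nhdsGT (sub_pos.mpr hax)] with r hr
    exact hμ _ _ (by linarith [hr.2]) (by linarith [hr.1]) hx.2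
  linarith [tendsto_nhds_unique (hF.congr' hincr)
    ((tendsto_measureReal_Ioc_sub_nhdsGT μp x).sub (tendsto_measureReal_Ioc_sub_nhdsGT μm x))]

end Real

/-- `Fam`, `Gam` stand for the left limits `F(a-)`, `G(a-)`, and `dF = μFp - μFm`,
`dG = μGp - μGm` are Jordan decompositions normalised by `dF (x, y] = F y - F x` and
`dF {a} = F a - F(a-)`. -/
theorem stmt8_general (a b : ℝ) (hab : a < b) (F G : ℝ → ℝ)
    (Fam Gam : ℝ)
    (hFL : Tendsto F (nhdsWithin a (Iio a)) (nhds Fam))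
    (hGL : Tendsto G (nhdsWithin a (Iio a)) (nhds Gam))
    (μFp μFm μGp μGm : Measure ℝ)
    [IsFiniteMeasure μFp] [IsFiniteMeasure μFm]
    [IsFiniteMeasure μGp] [IsFiniteMeasure μGm]
    (hμF : ∀ x y, a ≤ x → x ≤ y → y ≤ b →
      F y - F x = (μFp (Ioc x y)).toReal - (μFm (Ioc x y)).toReal)
    (hμG : ∀ x y, a ≤ x → x ≤ y → y ≤ b →
      G y - G x = (μGp (Ioc x y)).toReal - (μGm (Ioc x y)).toReal)
    (hμFa : F a - Fam = (μFp {a}).toReal - (μFm {a}).toReal)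
    (hμGa : G a - Gam = (μGp {a}).toReal - (μGm {a}).toReal)
    (hnocommon : ∀ x ∈ Icc a b, ContinuousAt F x ∨ ContinuousAt G x) :
    ((∫ x in Icc a b, F x ∂μGp) - (∫ x in Icc a b, F x ∂μGm))
      + ((∫ x in Icc a b, G x ∂μFp) - (∫ x in Icc a b, G x ∂μFm))
      = F b * G b - Fam * Gam := by
  simp only [← measureReal_def] at hμF hμG hμFa hμGa
  have hs : MeasurableSet (Icc a b) := measurableSet_Icc
  have hatoms : ∀ x ∈ Icc a b, μFp {x} = μFm {x} ∨ μGp {x} = μGm {x} := fun x hx =>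
    (hnocommon x hx).imp (measure_singleton_eq_of_continuousAt hμF hμFa hFL hx)
      (measure_singleton_eq_of_continuousAt hμG hμGa hGL hx)
  have hF_eq := fun y (hy : y ∈ Icc a b) => eq_add_signedCDF_of_measureReal_Ioc hμF hμFa hy
  have hG_eq := fun y (hy : y ∈ Icc a b) => eq_add_signedCDF_of_measureReal_Ioc hμG hμGa hy
  have hb : b ∈ Icc a b := ⟨hab.le, le_rfl⟩
  rw [setIntegral_eq_mul_add_of_eqOn hs hF_eq (integrable_signedCDF μFp μFm μGp _).integrableOn,
    setIntegral_eq_mul_add_of_eqOn hs hF_eq (integrable_signedCDF μFp μFm μGm _).integrableOn,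
    setIntegral_eq_mul_add_of_eqOn hs hG_eq (integrable_signedCDF μGp μGm μFp _).integrableOn,
    setIntegral_eq_mul_add_of_eqOn hs hG_eq (integrable_signedCDF μGp μGm μFm _).integrableOn,
    hF_eq b hb, hG_eq b hb, signedCDF_of_subset_Iic _ _ Icc_subset_Iic_self,
    signedCDF_of_subset_Iic _ _ Icc_subset_Iic_self]
  linear_combination setIntegral_signedCDF_by_parts μFp μFm μGp μGm hs hatoms

/-- Integration by parts for functions of bounded variation on the closed
interval `[a,b]`, when `F` and `G` have no common discontinuity point.
`Fam` and `Gam` are the left limits `F(a-)`, `G(a-)`; the signed measures `dF`,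
`dG` are represented by Jordan decompositions whose increments match those of
`F`, `G` over half-open subintervals, with atoms `F(a) - F(a-)`, `G(a) - G(a-)`
at `a`. -/
theorem stmt8 (a b : ℝ) (hab : a < b) (F G : ℝ → ℝ)
    (hF : BoundedVariationOn F (Icc a b)) (hG : BoundedVariationOn G (Icc a b))
    (Fam Gam : ℝ)
    (hFL : Tendsto F (nhdsWithin a (Iio a)) (nhds Fam))
    (hGL : Tendsto G (nhdsWithin a (Iio a)) (nhds Gam))
    (μFp μFm μGp μGm : Measure ℝ)
    [IsFiniteMeasure μFp] [IsFiniteMeasure μFm]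
    [IsFiniteMeasure μGp] [IsFiniteMeasure μGm]
    (hμF : ∀ x y, a ≤ x → x ≤ y → y ≤ b →
      F y - F x = (μFp (Ioc x y)).toReal - (μFm (Ioc x y)).toReal)
    (hμG : ∀ x y, a ≤ x → x ≤ y → y ≤ b →
      G y - G x = (μGp (Ioc x y)).toReal - (μGm (Ioc x y)).toReal)
    (hμFa : F a - Fam = (μFp {a}).toReal - (μFm {a}).toReal)
    (hμGa : G a - Gam = (μGp {a}).toReal - (μGm {a}).toReal)
    (hnocommon : ∀ x ∈ Icc a b, ContinuousAt F x ∨ ContinuousAt G x) :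
    ((∫ x in Icc a b, F x ∂μGp) - (∫ x in Icc a b, F x ∂μGm))
      + ((∫ x in Icc a b, G x ∂μFp) - (∫ x in Icc a b, G x ∂μFm))
      = F b * G b - Fam * Gam :=
  stmt8_general a b hab F G Fam Gam hFL hGL μFp μFm μGp μGm hμF hμG hμFa hμGa hnocommon
end

section
/- Let φ be a continuous piecewise linear concave function on [Z₁, Z_N] with knots among Z₁ < Z₂ < ... < Z_N and with maximum attained at Z_k. Then φ can be written as φ(x) = C + Σ_{i=2}^{k} a_i·min(x - Z_i, 0) + Σ_{i=k}^{N-1} b_i·min(Z_i - x, 0) with all a_i ≥ 0 and b_i ≥ 0. In particular, the cone of such functions is finitely generated by the functions x ↦ min(x - Z_i, 0) (2 ≤ i ≤ k), x ↦ min(Z_i - x, 0) (k ≤ i ≤ N-1), and the constants ±1. -/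
/-!
On `[Z i, Z (i+1)]` the function `φ` is affine with slope `σ (i+1)`; concavity makes `σ`
antitone and the maximum at `Z k` gives `σ k ≥ 0 ≥ σ (k+1)`. Expanding outward from `Z k`,
each knot `Z i` contributes a hinge `min (x - Z i) 0` (left of `Z k`) or `min (Z i - x) 0`
(right of `Z k`) with coefficient the slope drop `σ i - σ (i+1) ≥ 0`, where the slope on the
far side of `Z k` is taken to be `0`. The expansion to the left is the mirror image of the
expansion to the right.
-/

open Finset

/-- The slope on `[p i, p (i+1)]` is `s (i+1)`, so that `s m` and `s (n+1)` are free to serve as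
the slopes just outside `[p m, p n]`. -/
def AffineOnSegments (f : ℝ → ℝ) (p s : ℕ → ℝ) (m n : ℕ) : Prop :=
  ∀ i, m ≤ i → i < n → ∀ x ∈ Set.Icc (p i) (p (i + 1)), ∀ y ∈ Set.Icc (p i) (p (i + 1)),
    f y - f x = s (i + 1) * (y - x)

section HingeExpansion

variable {f : ℝ → ℝ} {p s : ℕ → ℝ} {m n : ℕ}

/-- The second conjunct, saying that the hinge sum continues the last affine piece beyond
`p n`, is what makes the induction go through. -/
theorem AffineOnSegments.eq_hinge_sum_left_aux (hf : AffineOnSegments f p s m n) (hmn : m ≤ n)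
    (hp : ∀ i, m ≤ i → i < n → p i ≤ p (i + 1)) :
    (∀ x ∈ Set.Icc (p m) (p n),
      f x = f (p m) + s m * (x - p m) + ∑ i ∈ Ico m n, (s i - s (i + 1)) * min (p i - x) 0) ∧
    ∀ x, p n ≤ x →
      f (p m) + s m * (x - p m) + ∑ i ∈ Ico m n, (s i - s (i + 1)) * min (p i - x) 0 =
        f (p n) + s n * (x - p n) := by
  induction n, hmn using Nat.le_induction with
  | base =>
    refine ⟨fun x hx => ?_, fun x _ => by simp⟩
    obtain rfl : x = p m := le_antisymm hx.2 hx.1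
    simp
  | succ n hmn ih =>
    obtain ⟨ih_eq, ih_ext⟩ := ih (fun i hi hin => hf i hi (by omega))
      (fun i hi hin => hp i hi (by omega))
    have hpn := hp n hmn n.lt_add_one
    have hseg := hf n hmn n.lt_add_one
    have hext : ∀ x, p n ≤ x →
        f (p m) + s m * (x - p m) + ∑ i ∈ Ico m (n + 1), (s i - s (i + 1)) * min (p i - x) 0 =
          f (p n) + s (n + 1) * (x - p n) := fun x hx => by
      rw [sum_Ico_succ_top hmn, ← add_assoc, ih_ext x hx, min_eq_left (by linarith)]
      ring
    refine ⟨fun x hx => ?_, fun x hx => ?_⟩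
    · rcases le_total x (p n) with hxn | hnx
      · rw [sum_Ico_succ_top hmn, ← add_assoc, ← ih_eq x ⟨hx.1, hxn⟩,
          min_eq_right (by linarith), mul_zero, add_zero]
      · rw [hext x hnx]
        linarith [hseg _ ⟨le_rfl, hpn⟩ x ⟨hnx, hx.2⟩]
    · rw [hext x (hpn.trans hx)]
      linarith [hseg _ ⟨le_rfl, hpn⟩ _ ⟨hpn, le_rfl⟩]

theorem AffineOnSegments.eq_hinge_sum_left (hf : AffineOnSegments f p s m n) (hmn : m ≤ n)
    (hp : ∀ i, m ≤ i → i < n → p i ≤ p (i + 1)) :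
    ∀ x ∈ Set.Icc (p m) (p n),
      f x = f (p m) + s m * (x - p m) + ∑ i ∈ Ico m n, (s i - s (i + 1)) * min (p i - x) 0 :=
  (hf.eq_hinge_sum_left_aux hmn hp).1

theorem AffineOnSegments.eq_hinge_sum_right (hf : AffineOnSegments f p s m n) (hmn : m ≤ n)
    (hp : ∀ i, m ≤ i → i < n → p i ≤ p (i + 1)) :
    ∀ x ∈ Set.Icc (p m) (p n),
      f x = f (p n) + s (n + 1) * (x - p n) +
        ∑ i ∈ Ioc m n, (s i - s (i + 1)) * min (x - p i) 0 := by
  intro x hx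
  have hmirror : AffineOnSegments (fun y => f (-y)) (fun j => -p (m + n - j))
      (fun j => -s (m + n + 1 - j)) m n := fun j hj hjn u hu v hv => by
    have e1 : m + n - j = m + n - (j + 1) + 1 := by omega
    have e2 : m + n + 1 - (j + 1) = m + n - (j + 1) + 1 := by omega
    simp only [e1, Set.mem_Icc] at hu hv
    dsimp only
    rw [e2]
    linarith [hf (m + n - (j + 1)) (by omega) (by omega) (-u) ⟨by linarith, by linarith⟩
      (-v) ⟨by linarith, by linarith⟩]
  have hexp := hmirror.eq_hinge_sum_left hmn
    (fun j hj hjn => by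
      rw [show m + n - j = m + n - (j + 1) + 1 by omega, neg_le_neg_iff]
      exact hp _ (by omega) (by omega))
    (-x) (by
      simp only [Nat.add_sub_cancel_left, Nat.add_sub_cancel, Set.mem_Icc, neg_le_neg_iff]
      exact hx.symm)
  simp only [neg_neg, show m + n - m = n by omega, show m + n + 1 - m = n + 1 by omega] at hexp
  rw [hexp]
  congr 1
  · ring
  · refine sum_nbij' (fun j => m + n - j) (fun i => m + n - i) ?_ ?_ ?_ ?_ ?_ <;>
      intro j hj <;> simp only [mem_Ico, mem_Ioc] at hj ⊢
    any_goals omega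
    rw [show m + n + 1 - (j + 1) = m + n - j by omega, show m + n + 1 - j = m + n - j + 1 by omega]
    simp only [neg_sub_neg]

end HingeExpansion

theorem exists_nonneg_sum_mul_eq {ι : Type*} {t : Finset ι} {c : ι → ℝ}
    (hc : ∀ i ∈ t, 0 ≤ c i) :
    ∃ a : ι → ℝ, (∀ i, 0 ≤ a i) ∧ ∀ g : ι → ℝ, ∑ i ∈ t, a i * g i = ∑ i ∈ t, c i * g i :=
  ⟨fun i => max (c i) 0, fun _ => le_max_right _ _,
    fun _ => sum_congr rfl fun i hi => by dsimp only; rw [max_eq_left (hc i hi)]⟩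

theorem sub_eq_slope_mul_sub {f : ℝ → ℝ} {a b c d : ℝ} (hab : a < b)
    (hf : ∀ x ∈ Set.Icc a b, f x = c * x + d) :
    ∀ x ∈ Set.Icc a b, ∀ y ∈ Set.Icc a b, f y - f x = slope f a b * (y - x) := by
  have hslope : slope f a b = c := by
    rw [slope_def_field, hf a ⟨le_rfl, hab.le⟩, hf b ⟨hab.le, le_rfl⟩,
      div_eq_iff (sub_ne_zero.2 hab.ne')]
    ring
  intro x hx y hy
  rw [hslope, hf x hx, hf y hy]
  ring

section Knots

variable {N k : ℕ} {Z : ℕ → ℝ} {φ : ℝ → ℝ}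

theorem knot_mem_Icc (hZ : StrictMonoOn Z (Set.Icc 1 N)) {i : ℕ} (hi : 1 ≤ i) (hiN : i ≤ N) :
    Z i ∈ Set.Icc (Z 1) (Z N) :=
  ⟨hZ.monotoneOn ⟨le_rfl, hi.trans hiN⟩ ⟨hi, hiN⟩ hi,
    hZ.monotoneOn ⟨hi, hiN⟩ ⟨hi.trans hiN, le_rfl⟩ hiN⟩

theorem knot_lt_succ (hZ : StrictMonoOn Z (Set.Icc 1 N)) {i : ℕ} (hi : 1 ≤ i) (hiN : i < N) :
    Z i < Z (i + 1) :=
  hZ ⟨hi, hiN.le⟩ ⟨by omega, hiN⟩ i.lt_add_one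

theorem slope_knot_succ_le (hZ : StrictMonoOn Z (Set.Icc 1 N))
    (hconc : ConcaveOn ℝ (Set.Icc (Z 1) (Z N)) φ) {i : ℕ} (hi : 2 ≤ i) (hiN : i < N) :
    slope φ (Z i) (Z (i + 1)) ≤ slope φ (Z (i - 1)) (Z i) := by
  have hlt := knot_lt_succ hZ (i := i - 1) (by omega) (by omega)
  rw [Nat.sub_add_cancel (by omega)] at hlt
  simpa only [slope_def_field] using hconc.slope_anti_adjacent
    (knot_mem_Icc hZ (by omega) (by omega)) (knot_mem_Icc hZ (by omega) hiN) hlt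
    (knot_lt_succ hZ (by omega) hiN)

theorem affineOnSegments_slope_knots (hZ : StrictMonoOn Z (Set.Icc 1 N))
    (hpl : ∀ i : ℕ, 1 ≤ i → i < N → ∃ s c : ℝ, ∀ x ∈ Set.Icc (Z i) (Z (i+1)), φ x = s * x + c)
    {s : ℕ → ℝ} {m n : ℕ} (hm : 1 ≤ m) (hn : n ≤ N)
    (hs : ∀ i, m < i → i ≤ n → s i = slope φ (Z (i - 1)) (Z i)) :
    AffineOnSegments φ Z s m n := by
  intro i hi hin
  obtain ⟨c, d, h⟩ := hpl i (hm.trans hi) (by omega)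
  rw [hs (i + 1) (by omega) hin, Nat.add_sub_cancel]
  exact sub_eq_slope_mul_sub (knot_lt_succ hZ (hm.trans hi) (by omega)) h

theorem exists_nonneg_eq_sum_left (hZ : StrictMonoOn Z (Set.Icc 1 N)) (hk1 : 1 ≤ k) (hkN : k ≤ N)
    (hconc : ConcaveOn ℝ (Set.Icc (Z 1) (Z N)) φ)
    (hpl : ∀ i : ℕ, 1 ≤ i → i < N → ∃ s c : ℝ, ∀ x ∈ Set.Icc (Z i) (Z (i+1)), φ x = s * x + c)
    (hmax : ∀ x ∈ Set.Icc (Z 1) (Z N), φ x ≤ φ (Z k)) :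
    ∃ a : ℕ → ℝ, (∀ i, 0 ≤ a i) ∧ ∀ x ∈ Set.Icc (Z 1) (Z k),
      φ x = φ (Z k) + ∑ i ∈ Icc 2 k, a i * min (x - Z i) 0 := by
  set s : ℕ → ℝ := fun i => if i ≤ k then slope φ (Z (i - 1)) (Z i) else 0 with hs
  have hexp := (affineOnSegments_slope_knots hZ hpl (s := s) le_rfl hkN
    fun i _ hik => if_pos hik).eq_hinge_sum_right hk1
    fun i hi hik => (knot_lt_succ hZ hi (by omega)).le
  have hnonneg : ∀ i ∈ Icc 2 k, 0 ≤ s i - s (i + 1) := by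
    intro i hi
    rw [mem_Icc] at hi
    rcases hi.2.lt_or_eq with hik | rfl
    · simp only [hs, if_pos hi.2, if_pos (show i + 1 ≤ k by omega), Nat.add_sub_cancel, sub_nonneg]
      exact slope_knot_succ_le hZ hconc hi.1 (by omega)
    · simp only [hs, le_rfl, if_true, show ¬ i + 1 ≤ i by omega, if_false, sub_zero]
      have hlt := knot_lt_succ hZ (i := i - 1) (by omega) (by omega)
      rw [Nat.sub_add_cancel (by omega)] at hlt
      exact (slope_nonneg_iff_of_le hlt.le).2 (hmax _ (knot_mem_Icc hZ (by omega) (by omega)))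
  obtain ⟨a, ha, hsum⟩ := exists_nonneg_sum_mul_eq hnonneg
  refine ⟨a, ha, fun x hx => ?_⟩
  rw [hsum, hexp x hx, ← Icc_add_one_left_eq_Ioc]
  simp [hs]

theorem exists_nonneg_eq_sum_right (hZ : StrictMonoOn Z (Set.Icc 1 N)) (hk1 : 1 ≤ k) (hkN : k ≤ N)
    (hconc : ConcaveOn ℝ (Set.Icc (Z 1) (Z N)) φ)
    (hpl : ∀ i : ℕ, 1 ≤ i → i < N → ∃ s c : ℝ, ∀ x ∈ Set.Icc (Z i) (Z (i+1)), φ x = s * x + c)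
    (hmax : ∀ x ∈ Set.Icc (Z 1) (Z N), φ x ≤ φ (Z k)) :
    ∃ b : ℕ → ℝ, (∀ i, 0 ≤ b i) ∧ ∀ x ∈ Set.Icc (Z k) (Z N),
      φ x = φ (Z k) + ∑ i ∈ Icc k (N - 1), b i * min (Z i - x) 0 := by
  set s : ℕ → ℝ := fun i => if k < i then slope φ (Z (i - 1)) (Z i) else 0 with hs
  have hexp := (affineOnSegments_slope_knots hZ hpl (s := s) hk1 le_rfl
    fun i hki _ => if_pos hki).eq_hinge_sum_left hkN
    fun i hi hiN => (knot_lt_succ hZ (by omega) hiN).le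
  have hnonneg : ∀ i ∈ Icc k (N - 1), 0 ≤ s i - s (i + 1) := by
    intro i hi
    rw [mem_Icc] at hi
    rcases hi.1.lt_or_eq with hki | rfl
    · simp only [hs, if_pos hki, if_pos (show k < i + 1 by omega), Nat.add_sub_cancel, sub_nonneg]
      exact slope_knot_succ_le hZ hconc (by omega) (by omega)
    · simp only [hs, lt_irrefl, if_false, show k < k + 1 by omega, if_true, Nat.add_sub_cancel,
        zero_sub, neg_nonneg]
      exact (slope_nonpos_iff_of_le (knot_lt_succ hZ hk1 (by omega)).le).2
        (hmax _ (knot_mem_Icc hZ (by omega) (by omega)))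
  obtain ⟨b, hb, hsum⟩ := exists_nonneg_sum_mul_eq hnonneg
  refine ⟨b, hb, fun x hx => ?_⟩
  rw [hsum, hexp x hx, ← Nat.sub_add_cancel (show 1 ≤ N by omega), Ico_add_one_right_eq_Icc]
  simp [hs]

end Knots
theorem stmt11_general (N : ℕ) (Z : ℕ → ℝ)
    (hZ : StrictMonoOn Z (Set.Icc 1 N)) (k : ℕ) (hk1 : 1 ≤ k) (hkN : k ≤ N)
    (φ : ℝ → ℝ)
    (hconc : ConcaveOn ℝ (Set.Icc (Z 1) (Z N)) φ)
    (hpl : ∀ i : ℕ, 1 ≤ i → i < N → ∃ s c : ℝ,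
      ∀ x ∈ Set.Icc (Z i) (Z (i+1)), φ x = s * x + c)
    (hmax : ∀ x ∈ Set.Icc (Z 1) (Z N), φ x ≤ φ (Z k)) :
    ∃ (C : ℝ) (a b : ℕ → ℝ), (∀ i, 0 ≤ a i) ∧ (∀ i, 0 ≤ b i) ∧
      ∀ x ∈ Set.Icc (Z 1) (Z N),
        φ x = C + (∑ i ∈ Finset.Icc 2 k, a i * min (x - Z i) 0)
          + ∑ i ∈ Finset.Icc k (N-1), b i * min (Z i - x) 0 := by
  obtain ⟨a, ha, hleft⟩ := exists_nonneg_eq_sum_left hZ hk1 hkN hconc hpl hmax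
  obtain ⟨b, hb, hright⟩ := exists_nonneg_eq_sum_right hZ hk1 hkN hconc hpl hmax
  refine ⟨φ (Z k), a, b, ha, hb, fun x hx => ?_⟩
  rcases le_total x (Z k) with hxk | hkx
  · have hzero : ∑ i ∈ Icc k (N - 1), b i * min (Z i - x) 0 = 0 := sum_eq_zero fun i hi => by
      rw [mem_Icc] at hi
      have hki := hZ.monotoneOn ⟨hk1, hkN⟩ ⟨hk1.trans hi.1, by omega⟩ hi.1
      rw [min_eq_right (by linarith), mul_zero]
    rw [hzero, add_zero, hleft x ⟨hx.1, hxk⟩]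
  · have hzero : ∑ i ∈ Icc 2 k, a i * min (x - Z i) 0 = 0 := sum_eq_zero fun i hi => by
      rw [mem_Icc] at hi
      have hik := hZ.monotoneOn ⟨by omega, hi.2.trans hkN⟩ ⟨hk1, hkN⟩ hi.2
      rw [min_eq_right (by linarith), mul_zero]
    rw [hzero, add_zero, hright x ⟨hkx, hx.2⟩]

/-- Representation of a continuous piecewise linear concave function with knots
among `Z 1 < ⋯ < Z N` and maximum at `Z k` as a nonnegative combination of the
generators `x ↦ min (x - Z i) 0`, `x ↦ min (Z i - x) 0` and a constant. -/
theorem stmt11 (N : ℕ) (hN : 2 ≤ N) (Z : ℕ → ℝ)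
    (hZ : StrictMonoOn Z (Set.Icc 1 N)) (k : ℕ) (hk1 : 1 ≤ k) (hkN : k ≤ N)
    (φ : ℝ → ℝ)
    (hcont : ContinuousOn φ (Set.Icc (Z 1) (Z N)))
    (hconc : ConcaveOn ℝ (Set.Icc (Z 1) (Z N)) φ)
    (hpl : ∀ i : ℕ, 1 ≤ i → i < N → ∃ s c : ℝ,
      ∀ x ∈ Set.Icc (Z i) (Z (i+1)), φ x = s * x + c)
    (hmax : ∀ x ∈ Set.Icc (Z 1) (Z N), φ x ≤ φ (Z k)) :
    ∃ (C : ℝ) (a b : ℕ → ℝ), (∀ i, 0 ≤ a i) ∧ (∀ i, 0 ≤ b i) ∧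
      ∀ x ∈ Set.Icc (Z 1) (Z N),
        φ x = C + (∑ i ∈ Finset.Icc 2 k, a i * min (x - Z i) 0)
          + ∑ i ∈ Finset.Icc k (N-1), b i * min (Z i - x) 0 :=
  stmt11_general N Z hZ k hk1 hkN φ hconc hpl hmax
end

section
/- Suppose g and ĝ are concave real-valued functions on T = [A,B], g is in the Hölder class H^{β,L}(T) for some β ∈ [1,2], L > 0. Then there exists K = K(β,L) ∈ (0,1] such that for any ε > 0 and 0 < δ < K·min(B-A, ε^{1/β}): if sup_{t∈T}(ĝ - g)(t) ≥ ε or sup_{t∈[A+δ, B-δ]}(g - ĝ)(t) ≥ ε, then there exists c with [c, c+δ] ⊆ T such that inf_{t∈[c,c+δ]}(ĝ - g)(t) ≥ ε/4 or inf_{t∈[c,c+δ]}(g - ĝ)(t) ≥ ε/4. -/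
/-!
For `g ∈ H^{β,L}`, two applications of the mean value theorem show that `g` rises above any of its
chords of length at most `r` by at most `L r^β`. So for concave `ĝ` the difference `ĝ - g` is
concave up to the additive error `L (3δ)^β ≤ ε/16` on chords of length at most `3δ`; this is where
`δ < K ε^{1/β}` enters.

If `ĝ - g > 7ε/8` at `t₀` but `ĝ - g < ε/4` at some `t₁` with `0 < t₁ - t₀ ≤ δ`, the chord from
`t₀` through `t₁` forces `ĝ - g ≤ -ε/4` at every `t` with `2δ ≤ t - t₀ ≤ 3δ`. By reflection the
same holds to the left of `t₀`, and one of the two sides has room. If instead `g - ĝ > 7ε/8` at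
`t₀`, approximate concavity bounds `(ĝ - g)(t₀)` below by the smaller of its values at any
`t₁ < t₀ < t₂`, so `g - ĝ` cannot drop below `ε/4` both on `[t₀ - δ, t₀]` and on `[t₀, t₀ + δ]`.
-/

open Set

/-- Concavity up to an additive error `η`, tested only on chords of length at most `r`. -/
def ApproxConcaveOn (r η : ℝ) (s : Set ℝ) (f : ℝ → ℝ) : Prop :=
  ∀ ⦃x⦄, x ∈ s → ∀ ⦃z⦄, z ∈ s → z - x ≤ r → ∀ ⦃y⦄, x < y → y < z →
    (z - y) * f x + (y - x) * f z ≤ (z - x) * (f y + η)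

def BoundedAwayOn (m : ℝ) (s : Set ℝ) (f : ℝ → ℝ) : Prop :=
  (∀ t ∈ s, m ≤ f t) ∨ ∀ t ∈ s, m ≤ -f t

open Pointwise in
theorem BoundedAwayOn.of_comp_neg {m : ℝ} {s : Set ℝ} {f : ℝ → ℝ}
    (hf : BoundedAwayOn m s fun t => f (-t)) : BoundedAwayOn m (-s) f :=
  hf.imp (fun h t ht => by simpa using h (-t) ht) fun h t ht => by simpa using h (-t) ht

theorem ConcaveOn.approxConcaveOn {s : Set ℝ} {f : ℝ → ℝ} (hf : ConcaveOn ℝ s f) (r : ℝ) :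
    ApproxConcaveOn r 0 s f := fun x hx z hz _ y hxy hyz => by
  have h := hf.slope_anti_adjacent hx hz hxy hyz
  rw [div_le_div_iff₀ (by linarith) (by linarith)] at h
  linear_combination h

theorem exists_mem_Ioo_sub_eq_mul_of_hasDerivWithinAt {g g' : ℝ → ℝ} {A B u v : ℝ}
    (hd : ∀ x ∈ Icc A B, HasDerivWithinAt g (g' x) (Icc A B) x)
    (hu : A ≤ u) (huv : u < v) (hv : v ≤ B) : ∃ ξ ∈ Ioo u v, g v - g u = g' ξ * (v - u) := by
  have hmem : ∀ x ∈ Icc u v, x ∈ Icc A B := fun x hx => ⟨hu.trans hx.1, hx.2.trans hv⟩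
  obtain ⟨ξ, hξ, h⟩ := exists_hasDerivAt_eq_slope g g' huv
    (fun x hx => ((hd x (hmem x hx)).continuousWithinAt).mono (Icc_subset_Icc hu hv))
    (fun x hx => (hd x (hmem x (Ioo_subset_Icc_self hx))).hasDerivAt
      (Icc_mem_nhds (hu.trans_lt hx.1) (hx.2.trans_le hv)))
  exact ⟨ξ, hξ, by rw [h, div_mul_cancel₀ _ (sub_ne_zero.2 huv.ne')]⟩

section Holder

variable {g g' : ℝ → ℝ} {β L r A B : ℝ}

theorem approxConcaveOn_neg_of_lipschitz (hL : 0 ≤ L)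
    (hg : ∀ x ∈ Icc A B, ∀ y ∈ Icc A B, |g y - g x| ≤ L * |y - x|) :
    ApproxConcaveOn r (L * r) (Icc A B) (-g) := fun x hx z hz hr y hxy hyz => by
  have hy : y ∈ Icc A B := ⟨hx.1.trans hxy.le, hyz.le.trans hz.2⟩
  have h₁ : g y - g x ≤ L * (y - x) := by
    simpa [abs_of_pos (sub_pos.2 hxy)] using (le_abs_self _).trans (hg x hx y hy)
  have h₂ : g y - g z ≤ L * (z - y) := by
    simpa [abs_sub_comm y z, abs_of_pos (sub_pos.2 hyz)] using
      (le_abs_self _).trans (hg z hz y hy)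
  calc (z - y) * (-g) x + (y - x) * (-g) z
      = (z - x) * (-g) y + ((z - y) * (g y - g x) + (y - x) * (g y - g z)) := by
        simp only [Pi.neg_apply]; ring
    _ ≤ (z - x) * (-g) y + ((z - y) * (L * (y - x)) + (y - x) * (L * (z - y))) := by
        gcongr
    _ ≤ (z - x) * ((-g) y + L * r) := by
        nlinarith [mul_le_mul_of_nonneg_left hr (mul_nonneg hL (sub_nonneg.2 (hxy.trans hyz).le)),
          mul_nonneg hL (add_nonneg (sq_nonneg (z - y)) (sq_nonneg (y - x)))]

theorem approxConcaveOn_neg_of_hasDerivWithinAt (hβ : 1 ≤ β) (hL : 0 ≤ L)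
    (hd : ∀ x ∈ Icc A B, HasDerivWithinAt g (g' x) (Icc A B) x)
    (hg' : ∀ x ∈ Icc A B, ∀ y ∈ Icc A B, |g' y - g' x| ≤ L * |y - x| ^ (β - 1)) :
    ApproxConcaveOn r (L * r ^ β) (Icc A B) (-g) := fun x hx z hz hr y hxy hyz => by
  have hxz : 0 < z - x := by linarith
  obtain ⟨ξ₁, hξ₁, h₁⟩ := exists_mem_Ioo_sub_eq_mul_of_hasDerivWithinAt hd hx.1 hxy
    (hyz.le.trans hz.2)
  obtain ⟨ξ₂, hξ₂, h₂⟩ := exists_mem_Ioo_sub_eq_mul_of_hasDerivWithinAt hd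
    (hx.1.trans hxy.le) hyz hz.2
  have hslope : g' ξ₁ - g' ξ₂ ≤ L * (z - x) ^ (β - 1) := calc
    g' ξ₁ - g' ξ₂ ≤ |g' ξ₁ - g' ξ₂| := le_abs_self _
    _ ≤ L * |ξ₁ - ξ₂| ^ (β - 1) :=
      hg' ξ₂ ⟨by linarith [hx.1, hξ₂.1], by linarith [hz.2, hξ₂.2]⟩
        ξ₁ ⟨by linarith [hx.1, hξ₁.1], by linarith [hz.2, hξ₁.2]⟩
    _ ≤ L * (z - x) ^ (β - 1) := by
      gcongr
      exact abs_le.2 ⟨by linarith [hξ₁.1, hξ₂.2], by linarith [hξ₁.2, hξ₂.1]⟩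
  have hpow : (z - x) * (z - x) ^ (β - 1) ≤ r ^ β := by
    rw [Real.rpow_sub_one hxz.ne', mul_div_cancel₀ _ hxz.ne']
    gcongr
  calc (z - y) * (-g) x + (y - x) * (-g) z
      = (z - x) * (-g) y + (z - y) * (y - x) * (g' ξ₁ - g' ξ₂) := by
        simp only [Pi.neg_apply]; linear_combination (z - y) * h₁ - (y - x) * h₂
    _ ≤ (z - x) * (-g) y + (z - y) * (y - x) * (L * (z - x) ^ (β - 1)) := by
        gcongr
    _ ≤ (z - x) * (-g) y + (z - x) * (z - x) * (L * (z - x) ^ (β - 1)) := by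
        gcongr
    _ ≤ (z - x) * ((-g) y + L * r ^ β) := by
        nlinarith [mul_le_mul_of_nonneg_left hpow (mul_nonneg hL hxz.le)]

end Holder

namespace ApproxConcaveOn

variable {r η η' ε δ a : ℝ} {s : Set ℝ} {f f₁ f₂ : ℝ → ℝ}

theorem mono (hf : ApproxConcaveOn r η s f) (h : η ≤ η') : ApproxConcaveOn r η' s f :=
  fun x hx z hz hr y hxy hyz => (hf hx hz hr hxy hyz).trans <| by gcongr; linarith

theorem add (h₁ : ApproxConcaveOn r η s f₁) (h₂ : ApproxConcaveOn r η' s f₂) :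
    ApproxConcaveOn r (η + η') s (f₁ + f₂) := fun x hx z hz hr y hxy hyz => by
  simp only [Pi.add_apply]
  linear_combination h₁ hx hz hr hxy hyz + h₂ hx hz hr hxy hyz

open Pointwise in
theorem comp_neg (hf : ApproxConcaveOn r η s f) :
    ApproxConcaveOn r η (-s) fun t => f (-t) := fun x hx z hz hr y hxy hyz => by
  linear_combination hf hz hx (by linarith) (neg_lt_neg hyz) (neg_lt_neg hxy)

theorem min_le_add (hf : ApproxConcaveOn r η s f) {x y z : ℝ} (hx : x ∈ s) (hz : z ∈ s)
    (hr : z - x ≤ r) (hxy : x < y) (hyz : y < z) : min (f x) (f z) ≤ f y + η := by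
  have h := hf hx hz hr hxy hyz
  by_contra! hlt
  nlinarith [mul_lt_mul_of_pos_left (hlt.trans_le (min_le_left _ _)) (sub_pos.2 hyz),
    mul_lt_mul_of_pos_left (hlt.trans_le (min_le_right _ _)) (sub_pos.2 hxy)]

theorem le_neg_apply_of_drop (hf : ApproxConcaveOn r η s f) (hη : η ≤ ε / 16) (hε : 0 ≤ ε)
    {x y z : ℝ} (hx : x ∈ s) (hz : z ∈ s) (hr : z - x ≤ r) (hxy : x < y) (hyz : y < z)
    (hgap : 2 * (y - x) ≤ z - x) (hfx : 7 * ε / 8 < f x) (hfy : f y < ε / 4) :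
    ε / 4 ≤ -f z := by
  have h := hf hx hz hr hxy hyz
  nlinarith [mul_lt_mul_of_pos_left hfx (sub_pos.2 hyz),
    mul_lt_mul_of_pos_left hfy (sub_pos.2 (hxy.trans hyz)),
    mul_le_mul_of_nonneg_left hη (sub_pos.2 (hxy.trans hyz)).le,
    mul_le_mul_of_nonneg_right hgap hε]

theorem exists_Icc_right (hf : ApproxConcaveOn (3 * δ) η s f) (hη : η ≤ ε / 16) (hε : 0 < ε)
    (hδ : 0 < δ) (hs : Icc a (a + 3 * δ) ⊆ s) (hfa : 7 * ε / 8 < f a) :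
    ∃ c, a ≤ c ∧ c + δ ≤ a + 3 * δ ∧ BoundedAwayOn (ε / 4) (Icc c (c + δ)) f := by
  by_cases hnear : ∀ t ∈ Icc a (a + δ), ε / 4 ≤ f t
  · exact ⟨a, le_rfl, by linarith, Or.inl hnear⟩
  push Not at hnear
  obtain ⟨t₁, ht₁, hft₁⟩ := hnear
  have hat₁ : a < t₁ := ht₁.1.lt_of_ne <| by rintro rfl; linarith
  refine ⟨a + 2 * δ, by linarith, by linarith, Or.inr fun t ht => ?_⟩
  exact hf.le_neg_apply_of_drop hη hε.le (hs ⟨le_rfl, by linarith⟩)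
    (hs ⟨by linarith [ht.1], by linarith [ht.2]⟩) (by linarith [ht.2]) hat₁
    (by linarith [ht₁.2, ht.1]) (by linarith [ht₁.2, ht.1]) hfa hft₁

theorem exists_Icc_left (hf : ApproxConcaveOn (3 * δ) η s f) (hη : η ≤ ε / 16) (hε : 0 < ε)
    (hδ : 0 < δ) (hs : Icc (a - 3 * δ) a ⊆ s) (hfa : 7 * ε / 8 < f a) :
    ∃ c, a - 3 * δ ≤ c ∧ c + δ ≤ a ∧ BoundedAwayOn (ε / 4) (Icc c (c + δ)) f := by
  have hs' : Icc (-a) (-a + 3 * δ) ⊆ -s := fun t ht =>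
    hs ⟨by linarith [ht.2], by linarith [ht.1]⟩
  obtain ⟨c, hac, hca, hc⟩ := hf.comp_neg.exists_Icc_right hη hε hδ hs' (by rwa [neg_neg])
  refine ⟨-(c + δ), by linarith, by linarith, ?_⟩
  simpa [neg_Icc] using hc.of_comp_neg

theorem exists_Icc_of_lt_apply {A B t : ℝ} (hf : ApproxConcaveOn (3 * δ) η (Icc A B) f)
    (hη : η ≤ ε / 16) (hε : 0 < ε) (hδ : 0 < δ) (hAB : 6 * δ ≤ B - A) (ht : t ∈ Icc A B)
    (hft : 7 * ε / 8 < f t) :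
    ∃ c, A ≤ c ∧ c + δ ≤ B ∧ BoundedAwayOn (ε / 4) (Icc c (c + δ)) f := by
  rcases le_total t ((A + B) / 2) with hmid | hmid
  · obtain ⟨c, htc, hc, hfc⟩ := hf.exists_Icc_right hη hε hδ
      (Icc_subset_Icc ht.1 (by linarith)) hft
    exact ⟨c, ht.1.trans htc, by linarith, hfc⟩
  · obtain ⟨c, htc, hc, hfc⟩ := hf.exists_Icc_left hη hε hδ
      (Icc_subset_Icc (by linarith) ht.2) hft
    exact ⟨c, by linarith, hc.trans ht.2, hfc⟩

theorem exists_Icc_of_apply_lt {A B t : ℝ} (hf : ApproxConcaveOn (3 * δ) η (Icc A B) f)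
    (hη : η ≤ ε / 16) (hε : 0 < ε) (hδ : 0 < δ) (ht : t ∈ Icc (A + δ) (B - δ))
    (hft : f t < -(7 * ε / 8)) :
    ∃ c, A ≤ c ∧ c + δ ≤ B ∧ BoundedAwayOn (ε / 4) (Icc c (c + δ)) f := by
  by_cases hleft : ∀ x ∈ Icc (t - δ) t, ε / 4 ≤ -f x
  · exact ⟨t - δ, by linarith [ht.1], by linarith [ht.2], Or.inr (by rwa [sub_add_cancel])⟩
  by_cases hright : ∀ z ∈ Icc t (t + δ), ε / 4 ≤ -f z
  · exact ⟨t, by linarith [ht.1], by linarith [ht.2], Or.inr hright⟩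
  push Not at hleft hright
  obtain ⟨x, hx, hfx⟩ := hleft
  obtain ⟨z, hz, hfz⟩ := hright
  have hxt : x < t := hx.2.lt_of_ne <| by rintro rfl; linarith
  have htz : t < z := hz.1.lt_of_ne <| by rintro rfl; linarith
  have hmin := hf.min_le_add ⟨by linarith [ht.1, hx.1], by linarith [ht.2]⟩
    ⟨by linarith [ht.1], by linarith [ht.2, hz.2]⟩ (by linarith [hx.1, hz.2]) hxt htz
  have := lt_min (neg_lt.1 hfx) (neg_lt.1 hfz)
  linarith

end ApproxConcaveOn

theorem exists_mem_lt_apply_of_le_csSup_image {f : ℝ → ℝ} {s : Set ℝ} {a b : ℝ}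
    (hs : s.Nonempty) (hab : a < b) (h : b ≤ sSup (f '' s)) : ∃ t ∈ s, a < f t := by
  obtain ⟨_, ⟨t, ht, rfl⟩, hlt⟩ := exists_lt_of_lt_csSup (hs.image f) (hab.trans_le h)
  exact ⟨t, ht, hlt⟩

theorem rpow_le_mul_of_le_mul_rpow_one_div {r κ ε β : ℝ} (hr : 0 ≤ r) (hκ₀ : 0 ≤ κ)
    (hκ₁ : κ ≤ 1) (hβ : 1 ≤ β) (hε : 0 ≤ ε) (h : r ≤ κ * ε ^ (1 / β)) : r ^ β ≤ κ * ε :=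
  calc r ^ β ≤ (κ * ε ^ (1 / β)) ^ β := by gcongr
    _ = κ ^ β * ε := by
      rw [Real.mul_rpow hκ₀ (by positivity), ← Real.rpow_mul hε,
        one_div_mul_cancel (by linarith), Real.rpow_one]
    _ ≤ κ * ε := by gcongr; exact Real.rpow_le_self_of_le_one hκ₀ hκ₁ hβ

theorem six_mul_le_sub_and_mul_rpow_le {β L A B ε δ : ℝ} (hβ : 1 ≤ β) (hL : 0 < L)
    (hε : 0 < ε) (hδ : 0 < δ)
    (h : δ < min (1 / 6) (1 / (48 * L)) * min (B - A) (ε ^ (1 / β))) :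
    6 * δ ≤ B - A ∧ L * (3 * δ) ^ β ≤ ε / 16 := by
  set K := min (1 / 6 : ℝ) (1 / (48 * L))
  have hK₀ : 0 ≤ K := by positivity
  have hK₆ : K ≤ 1 / 6 := min_le_left _ _
  have hKL : K * L ≤ 1 / 48 := by
    have := (le_div_iff₀ (by positivity)).1 (min_le_right _ _ : K ≤ 1 / (48 * L))
    linarith
  have hδA := h.trans_le (mul_le_mul_of_nonneg_left (min_le_left _ _) hK₀)
  have hδε := h.trans_le (mul_le_mul_of_nonneg_left (min_le_right _ _) hK₀)
  have := rpow_le_mul_of_le_mul_rpow_one_div (by positivity) (by positivity) (by linarith) hβ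
    hε.le (by linarith : 3 * δ ≤ 3 * K * ε ^ (1 / β))
  constructor <;> nlinarith

/-- Lemma A.3 of Dümbgen–Rufibach (2009): if two concave functions differ by at
least `ε` somewhere (in the appropriate one-sided sense), and one of them lies
in the Hölder class `H^{β,L}`, then they differ by at least `ε/4` uniformly on
some subinterval of length `δ`. -/
theorem stmt14 (β L : ℝ) (hβ : β ∈ Set.Icc 1 2) (hL : 0 < L) :
    ∃ K : ℝ, K ∈ Set.Ioc 0 1 ∧
      ∀ A B : ℝ, A < B → ∀ g ghat g' : ℝ → ℝ,
        ConcaveOn ℝ (Set.Icc A B) g → ConcaveOn ℝ (Set.Icc A B) ghat →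
        (β = 1 → ∀ x ∈ Set.Icc A B, ∀ y ∈ Set.Icc A B,
          |g y - g x| ≤ L * |y - x|) →
        (1 < β → (∀ x ∈ Set.Icc A B, HasDerivWithinAt g (g' x) (Set.Icc A B) x) ∧
          ∀ x ∈ Set.Icc A B, ∀ y ∈ Set.Icc A B,
            |g' y - g' x| ≤ L * |y - x| ^ (β - 1)) →
        ∀ ε : ℝ, 0 < ε → ∀ δ : ℝ, 0 < δ → δ < K * min (B - A) (ε ^ (1/β)) →
        (ε ≤ sSup ((fun t => ghat t - g t) '' Set.Icc A B) ∨
          ε ≤ sSup ((fun t => g t - ghat t) '' Set.Icc (A + δ) (B - δ))) →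
        ∃ c : ℝ, A ≤ c ∧ c + δ ≤ B ∧
          ((∀ t ∈ Set.Icc c (c + δ), ε / 4 ≤ ghat t - g t) ∨
            (∀ t ∈ Set.Icc c (c + δ), ε / 4 ≤ g t - ghat t)) := by
  refine ⟨min (1 / 6) (1 / (48 * L)), ⟨by positivity, (min_le_left _ _).trans (by norm_num)⟩,
    ?_⟩
  intro A B hAB g ghat g' _ hghat hlip hhol ε hε δ hδ hδK hsup
  obtain ⟨hδA, hη⟩ := six_mul_le_sub_and_mul_rpow_le hβ.1 hL hε hδ hδK
  have hg : ApproxConcaveOn (3 * δ) (L * (3 * δ) ^ β) (Icc A B) (-g) := by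
    rcases hβ.1.eq_or_lt with hβ₁ | hβ₁
    · simpa [← hβ₁] using approxConcaveOn_neg_of_lipschitz hL.le (hlip hβ₁.symm)
    · exact approxConcaveOn_neg_of_hasDerivWithinAt hβ.1 hL.le (hhol hβ₁).1 (hhol hβ₁).2
  have hD : ApproxConcaveOn (3 * δ) (ε / 16) (Icc A B) (ghat - g) := by
    simpa [sub_eq_add_neg] using ((hghat.approxConcaveOn _).add hg).mono (by linarith)
  obtain ⟨c, hAc, hcB, hc⟩ :
      ∃ c, A ≤ c ∧ c + δ ≤ B ∧ BoundedAwayOn (ε / 4) (Icc c (c + δ)) (ghat - g) := by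
    rcases hsup with hs | hs
    · obtain ⟨t, ht, hft⟩ := exists_mem_lt_apply_of_le_csSup_image (nonempty_Icc.2 hAB.le)
        (by linarith : 7 * ε / 8 < ε) hs
      exact hD.exists_Icc_of_lt_apply le_rfl hε hδ hδA ht hft
    · obtain ⟨t, ht, hft⟩ := exists_mem_lt_apply_of_le_csSup_image
        (nonempty_Icc.2 (by linarith)) (by linarith : 7 * ε / 8 < ε) hs
      exact hD.exists_Icc_of_apply_lt le_rfl hε hδ ht (by simp only [Pi.sub_apply]; linarith)
  exact ⟨c, hAc, hcB, by simpa only [BoundedAwayOn, Pi.sub_apply, neg_sub] using hc⟩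
end

section
/- Let a < 0 < b with b > -a and let Δ_{LK,1}(t) = Δ(t) - M·1_{[a,b]}(t) with Δ as in the Case-1 left-knot construction and M = b(5b-a)/(2(5b+a)). Then ∫_a^b t·Δ_{LK,1}(t) dt = -(5/12)·((b-a)b³/(5b+a)) ≤ -b³/12, and ∫_a^b t²·Δ_{LK,1}(t) dt ≤ -b⁴/12. -/
/-!
On `[a, b]` the function `Δ_{LK,1}` is affine on each of `[a, a/4]`, `[a/4, 0]` and `[0, b]`, so
its moments are sums of moments of affine functions, which are explicit polynomials in the knots,
the slopes and `M`. Substituting `m₂ = 3b(3a - b)/(a(5b + a))` and `M` collapses them to rational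
functions with denominator `5b + a > 0`; the bounds then reduce to sign conditions on monomials,
since `a < 0 < b`.
-/

open Set MeasureTheory intervalIntegral
open scoped Interval

section PiecewiseAffineMoments

variable {g : ℝ → ℝ} {x y z w p q : ℝ}

theorem integral_pow_mul_affine (k : ℕ) (p q x y : ℝ) :
    ∫ t in x..y, t ^ k * (p * t + q) =
      p * (y ^ (k + 2) - x ^ (k + 2)) / (k + 2) + q * (y ^ (k + 1) - x ^ (k + 1)) / (k + 1) := by
  have hsplit : (fun t : ℝ => t ^ k * (p * t + q)) = fun t => p * t ^ (k + 1) + q * t ^ k := by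
    funext t; ring
  rw [hsplit, integral_add ((intervalIntegrable_pow _).const_mul p)
    ((intervalIntegrable_pow _).const_mul q), intervalIntegral.integral_const_mul,
    intervalIntegral.integral_const_mul, integral_pow, integral_pow]
  push_cast
  ring

theorem intervalIntegrable_pow_mul_of_eqOn_affine (k : ℕ)
    (hg : EqOn g (fun t => p * t + q) (Ι x y)) :
    IntervalIntegrable (fun t => t ^ k * g t) volume x y :=
  (by fun_prop : Continuous fun t : ℝ => t ^ k * (p * t + q)).intervalIntegrable x y
    |>.congr fun t ht => by simp only [hg ht]

theorem integral_pow_mul_eq_of_eqOn_affine (k : ℕ) (hg : EqOn g (fun t => p * t + q) (Ι x y)) :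
    ∫ t in x..y, t ^ k * g t = ∫ t in x..y, t ^ k * (p * t + q) :=
  integral_congr_ae (Filter.Eventually.of_forall fun t ht => by simp only [hg ht])

theorem integral_pow_mul_of_piecewise_affine (k : ℕ) {p₁ q₁ p₂ q₂ p₃ q₃ : ℝ}
    (hxy : x ≤ y) (hyz : y ≤ z) (hzw : z ≤ w)
    (hg : ∀ t ∈ Icc x w, g t = if t ≤ y then p₁ * t + q₁
      else if t ≤ z then p₂ * t + q₂ else p₃ * t + q₃) :
    ∫ t in x..w, t ^ k * g t = (∫ t in x..y, t ^ k * (p₁ * t + q₁)) +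
      (∫ t in y..z, t ^ k * (p₂ * t + q₂)) + ∫ t in z..w, t ^ k * (p₃ * t + q₃) := by
  have h₁ : EqOn g (fun t => p₁ * t + q₁) (Ι x y) := by
    rw [uIoc_of_le hxy]
    rintro t ⟨hxt, hty⟩
    rw [hg t ⟨hxt.le, by linarith⟩, if_pos hty]
  have h₂ : EqOn g (fun t => p₂ * t + q₂) (Ι y z) := by
    rw [uIoc_of_le hyz]
    rintro t ⟨hyt, htz⟩
    rw [hg t ⟨by linarith, by linarith⟩, if_neg (not_le.mpr hyt), if_pos htz]
  have h₃ : EqOn g (fun t => p₃ * t + q₃) (Ι z w) := by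
    rw [uIoc_of_le hzw]
    rintro t ⟨hzt, htw⟩
    rw [hg t ⟨by linarith, htw⟩, if_neg (by linarith), if_neg (not_le.mpr hzt)]
  have hint₁ := intervalIntegrable_pow_mul_of_eqOn_affine k h₁
  have hint₂ := intervalIntegrable_pow_mul_of_eqOn_affine k h₂
  have hint₃ := intervalIntegrable_pow_mul_of_eqOn_affine k h₃
  rw [← integral_add_adjacent_intervals (hint₁.trans hint₂) hint₃,
    ← integral_add_adjacent_intervals hint₁ hint₂, integral_pow_mul_eq_of_eqOn_affine k h₁,
    integral_pow_mul_eq_of_eqOn_affine k h₂, integral_pow_mul_eq_of_eqOn_affine k h₃]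

end PiecewiseAffineMoments

section MomentBounds

variable {a b : ℝ}

theorem left_knot_first_moment_le (ha : a ≤ 0) (hb : 0 ≤ b) (h : 0 < 5 * b + a) :
    -(5 / 12) * ((b - a) * b ^ 3 / (5 * b + a)) ≤ -b ^ 3 / 12 := by
  rw [mul_div_assoc', neg_mul, neg_div, neg_div, neg_le_neg_iff, le_div_iff₀ h]
  nlinarith [mul_nonneg (neg_nonneg.mpr ha) (pow_nonneg hb 3)]

theorem left_knot_second_moment_le (ha : a ≤ 0) (hb : 0 ≤ b) (h : 0 < 5 * b + a) :
    (-3 * a ^ 4 * b + 19 * a ^ 3 * b ^ 2 + 24 * a * b ^ 4 - 40 * b ^ 5) / (96 * (5 * b + a)) ≤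
      -b ^ 4 / 12 := by
  have : 0 ≤ a ^ 4 * b := by positivity
  have : a ^ 3 * b ^ 2 ≤ 0 :=
    mul_nonpos_of_nonpos_of_nonneg (Odd.pow_nonpos (by decide) ha) (by positivity)
  have : a * b ^ 4 ≤ 0 := mul_nonpos_of_nonpos_of_nonneg ha (by positivity)
  rw [div_le_iff₀ (by positivity)]
  linarith

end MomentBounds

/-- Monomial integrals of the shifted Case-1 left-knot perturbation
`Δ_{LK,1} = Δ - M·1_{[a,b]}` with `M = b(5b-a)/(2(5b+a))`. -/
theorem stmt16 (a b : ℝ) (ha : a < 0) (hb : 0 < b) (hba : -a < b)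
    (m₂ M : ℝ)
    (hm₂ : m₂ = ((-9 - 3 * (b / (-a))) / (1 - 5 * (b / (-a)))) * (b / (-a)))
    (hM : M = b * (5*b - a) / (2 * (5*b + a)))
    (Δ Δ₁ : ℝ → ℝ)
    (hΔ : ∀ t ∈ Set.Icc a b,
      Δ t = if t ≤ a/4 then ((b + m₂ * (-a/4)) / (a/4 - a)) * (t - a)
        else if t ≤ 0 then b + m₂ * (-t) else b - t)
    (hΔ₁ : ∀ t ∈ Set.Icc a b, Δ₁ t = Δ t - M) :
    (∫ t in a..b, t * Δ₁ t) = -(5/12) * ((b - a) * b^3 / (5*b + a)) ∧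
    -(5/12) * ((b - a) * b^3 / (5*b + a)) ≤ -b^3/12 ∧
    (∫ t in a..b, t^2 * Δ₁ t) ≤ -b^4/12 := by
  have ha0 : a ≠ 0 := ha.ne
  have h5 : 5 * b + a ≠ 0 := by linarith
  have hm₂' : m₂ = 3 * b * (3 * a - b) / (a * (5 * b + a)) := by
    rw [hm₂]; field_simp; ring
  -- `field_simp` recognises the denominator `5 * b + a` only in its normal form `b * 5 + a`
  have h5' : b * 5 + a ≠ 0 := by linarith
  set K := (b + m₂ * (-a / 4)) / (a / 4 - a) with hK
  have hK' : K = -(b * (23 * b - 5 * a)) / (3 * a * (5 * b + a)) := by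
    rw [hK, hm₂']; field_simp; ring
  have hΔ₁' : ∀ t ∈ Icc a b, Δ₁ t = if t ≤ a / 4 then K * t + (-(K * a) - M)
      else if t ≤ 0 then -m₂ * t + (b - M) else -1 * t + (b - M) := by
    intro t ht
    rw [hΔ₁ t ht, hΔ t ht]
    split_ifs <;> ring
  have moment (k : ℕ) :=
    integral_pow_mul_of_piecewise_affine k (by linarith) (by linarith) hb.le hΔ₁'
  simp only [integral_pow_mul_affine] at moment
  have first : ∫ t in a..b, t * Δ₁ t = -(5 / 12) * ((b - a) * b ^ 3 / (5 * b + a)) := by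
    simpa only [pow_one] using (moment 1).trans (by rw [hK', hm₂', hM]; field_simp; ring)
  have second : ∫ t in a..b, t ^ 2 * Δ₁ t =
      (-3 * a ^ 4 * b + 19 * a ^ 3 * b ^ 2 + 24 * a * b ^ 4 - 40 * b ^ 5) / (96 * (5 * b + a)) := by
    rw [moment, hK', hm₂', hM]; field_simp; ring
  have hpos : 0 < 5 * b + a := by linarith
  exact ⟨first, left_knot_first_moment_le ha.le hb.le hpos,
    second ▸ left_knot_second_moment_le ha.le hb.le hpos⟩
end
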